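/- arXiv:2503.01500 — 4 statements merged into one kernel-verified Lean document; each statement's English description precedes it below -/
import Mathlib

section
/- Let p and q be integers with 2 ≤ p < q, and let a and b be the (unique) non-negative integers with q = a·p + b and 0 ≤ b ≤ p − 1. Then there exists a finite connected simple graph G with ind-match(G) = p, min-match(G) = match(G) = q, and at most (a² + 1)p + (2a + 1)b edges. -/
variable {V : Type*}

/-- A matching of `G`: a set of edges of `G` that are pairwise disjoint. -/
def IsMatchingSet (G : SimpleGraph V) (M : Set (Sym2 V)) : Prop :=
  (∀ e ∈ M, e ∈ G.edgeSet) ∧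
    ∀ e ∈ M, ∀ f ∈ M, e ≠ f → ∀ v : V, v ∈ e → v ∉ f

/-- A maximal matching of `G`: a matching `M` such that `M ∪ {e}` is not a matching
for every edge `e` of `G` not in `M`. -/
def IsMaximalMatchingSet (G : SimpleGraph V) (M : Set (Sym2 V)) : Prop :=
  IsMatchingSet G M ∧
    ∀ e ∈ G.edgeSet, e ∉ M → ¬ IsMatchingSet G (insert e M)

/-- An induced matching of `G`: a matching `M` such that no edge of `G` meets
two distinct edges of `M`. -/
def IsInducedMatchingSet (G : SimpleGraph V) (M : Set (Sym2 V)) : Prop :=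
  IsMatchingSet G M ∧
    ∀ e ∈ M, ∀ f ∈ M, e ≠ f → ∀ g ∈ G.edgeSet,
      ¬ ((∃ v : V, v ∈ g ∧ v ∈ e) ∧ (∃ v : V, v ∈ g ∧ v ∈ f))

/-- The matching number of `G`: the maximum size of a matching. -/
noncomputable def matchNum (G : SimpleGraph V) : ℕ :=
  sSup {n | ∃ M : Set (Sym2 V), IsMatchingSet G M ∧ M.ncard = n}

/-- The minimum matching number of `G`: the minimum size of a maximal matching. -/
noncomputable def minMatchNum (G : SimpleGraph V) : ℕ :=
  sInf {n | ∃ M : Set (Sym2 V), IsMaximalMatchingSet G M ∧ M.ncard = n}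

/-- The induced matching number of `G`: the maximum size of an induced matching. -/
noncomputable def indMatchNum (G : SimpleGraph V) : ℕ :=
  sSup {n | ∃ M : Set (Sym2 V), IsInducedMatchingSet G M ∧ M.ncard = n}

/-!
Glue `p` complete bipartite graphs `K_{s_i, s_i}` to a hub vertex adjacent to one left vertex of
each, with `b` of the `s_i` equal to `a + 1` and the others equal to `a`, so that `∑ s_i = q` and
there are `∑ s_i² + p` edges. The `q` left vertices cover every edge, so no matching is larger than
`q`. A maximal matching leaving a left vertex of some `K_{s, s}` exposed matches all `s` right
vertices of that copy into its `s` left vertices, a contradiction; so every maximal matching has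
exactly `q` edges. Two edges of an induced matching cannot meet the same copy, even through the hub,
while one edge from each copy is an induced matching of size `p`.
-/

theorem Set.ncard_le_ncard_of_forall_subsingleton {α β : Type*} {s : Set α} {t : Set β}
    (r : α → β → Prop) (hs : ∀ a ∈ s, ∃ b ∈ t, r a b)
    (ht : ∀ b ∈ t, {a ∈ s | r a b}.Subsingleton) (htf : t.Finite) : s.ncard ≤ t.ncard := by
  obtain rfl | ⟨a₀, ha₀⟩ := s.eq_empty_or_nonempty
  · simp
  have : Nonempty β := ⟨(hs a₀ ha₀).choose⟩
  choose! f hft hfr using hs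
  refine Set.ncard_le_ncard_of_injOn f hft (fun a ha a' ha' h => ?_) htf
  exact ht (f a) (hft a ha) ⟨ha, hfr a ha⟩ ⟨ha', h ▸ hfr a' ha'⟩

section Matchings

variable {W : Type*} {G : SimpleGraph V} {G' : SimpleGraph W} {M : Set (Sym2 V)}

theorem IsMatchingSet.eq_of_mem_of_mem (hM : IsMatchingSet G M) {e f : Sym2 V} {v : V}
    (he : e ∈ M) (hf : f ∈ M) (hve : v ∈ e) (hvf : v ∈ f) : e = f := by
  by_contra hne
  exact hM.2 e he f hf hne v hve hvf

theorem IsMatchingSet.ncard_le_of_forall_exists_mem (hM : IsMatchingSet G M) {S : Set V}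
    (hS : S.Finite) (hcover : ∀ e ∈ M, ∃ v ∈ S, v ∈ e) : M.ncard ≤ S.ncard :=
  Set.ncard_le_ncard_of_forall_subsingleton (fun e v => v ∈ e) hcover
    (fun _ _ _ he _ hf => hM.eq_of_mem_of_mem he.1 hf.1 he.2 hf.2) hS

theorem ncard_le_ncard_of_saturated_independent {S : Set V} (hMG : M ⊆ G.edgeSet) (hMf : M.Finite)
    (hS : ∀ u ∈ S, ∀ v ∈ S, ¬ G.Adj u v) (hsat : ∀ v ∈ S, ∃ e ∈ M, v ∈ e) :
    S.ncard ≤ M.ncard := by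
  refine Set.ncard_le_ncard_of_forall_subsingleton (fun v e => v ∈ e) hsat ?_ hMf
  intro e he u hu v hv
  by_contra huv
  have huvG := hMG he
  rw [(Sym2.mem_and_mem_iff huv).1 ⟨hu.2, hv.2⟩] at huvG
  exact hS u hu.1 v hv.1 huvG

theorem IsMaximalMatchingSet.exists_mem_of_adj (hM : IsMaximalMatchingSet G M) {u v : V}
    (huv : G.Adj u v) : (∃ e ∈ M, u ∈ e) ∨ ∃ e ∈ M, v ∈ e := by
  by_contra! h
  obtain ⟨hu, hv⟩ := h
  have hfree : ∀ e ∈ M, ∀ w ∈ s(u, v), w ∉ e := by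
    intro e he w hw
    rcases Sym2.mem_iff.1 hw with rfl | rfl
    exacts [hu e he, hv e he]
  refine hM.2 s(u, v) huv (fun h => hu _ h (Sym2.mem_mk_left u v)) ⟨?_, ?_⟩
  · rintro e (rfl | he)
    exacts [huv, hM.1.1 e he]
  · rintro e (rfl | he) f (rfl | hf) hne w hwe hwf
    · exact hne rfl
    · exact hfree f hf w hwe hwf
    · exact hfree e he w hwf hwe
    · exact hM.1.2 e he f hf hne w hwe hwf

theorem IsMatchingSet.forall_exists_mem_of_neighbors_subset [Finite V] (hM : IsMatchingSet G M)
    {A B : Set V} (hcard : A.ncard ≤ B.ncard) (hBA : ∀ b ∈ B, ∀ v, G.Adj b v → v ∈ A)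
    (hB : ∀ b ∈ B, ∃ e ∈ M, b ∈ e) : ∀ a ∈ A, ∃ e ∈ M, a ∈ e := by
  have hpartner : ∀ b ∈ B, ∃ w, s(b, w) ∈ M := by
    intro b hb
    obtain ⟨e, he, hbe⟩ := hB b hb
    obtain ⟨w, rfl⟩ := Sym2.mem_iff_exists.1 hbe
    exact ⟨w, he⟩
  choose! f hf using hpartner
  have hinj : Set.InjOn f B := by
    intro b hb b' hb' h
    have := hM.eq_of_mem_of_mem (hf b hb) (hf b' hb') (Sym2.mem_mk_right b (f b))
      (h ▸ Sym2.mem_mk_right b' (f b'))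
    rw [h] at this
    exact Sym2.congr_left.1 this
  have himage : f '' B = A := by
    refine Set.eq_of_subset_of_ncard_le ?_ (hcard.trans (hinj.ncard_image).ge) (Set.toFinite A)
    rintro _ ⟨b, hb, rfl⟩
    exact hBA b hb (f b) (hM.1 _ (hf b hb))
  rintro a ha
  obtain ⟨b, hb, rfl⟩ := himage ▸ ha
  exact ⟨_, hf b hb, Sym2.mem_mk_right b (f b)⟩

theorem isInducedMatchingSet_iff : IsInducedMatchingSet G M ↔ (∀ e ∈ M, e ∈ G.edgeSet) ∧
    ∀ e ∈ M, ∀ f ∈ M, e ≠ f → ∀ u ∈ e, ∀ v ∈ f, ¬ G.Adj u v := by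
  constructor
  · rintro ⟨hM, hind⟩
    refine ⟨hM.1, fun e he f hf hne u hu v hv huv => ?_⟩
    exact hind e he f hf hne s(u, v) huv
      ⟨⟨u, Sym2.mem_mk_left u v, hu⟩, ⟨v, Sym2.mem_mk_right u v, hv⟩⟩
  · rintro ⟨hMG, hsep⟩
    have hdisj : ∀ e ∈ M, ∀ f ∈ M, e ≠ f → ∀ v, v ∈ e → v ∉ f := by
      intro e he f hf hne v hve hvf
      obtain ⟨w, rfl⟩ := Sym2.mem_iff_exists.1 hvf
      exact hsep e he _ hf hne v hve w (Sym2.mem_mk_right v w) (hMG _ hf)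
    refine ⟨⟨hMG, hdisj⟩, ?_⟩
    rintro e he f hf hne g hg ⟨⟨u, hug, hue⟩, ⟨v, hvg, hvf⟩⟩
    have huv : u ≠ v := fun huv => hdisj e he f hf hne u hue (huv ▸ hvf)
    rw [(Sym2.mem_and_mem_iff huv).1 ⟨hug, hvg⟩] at hg
    exact hsep e he f hf hne u hue v hvf hg

theorem IsMatchingSet.map (φ : G ≃g G') (hM : IsMatchingSet G M) :
    IsMatchingSet G' (Sym2.map φ '' M) := by
  refine ⟨?_, ?_⟩
  · rintro _ ⟨e, he, rfl⟩
    exact φ.map_mem_edgeSet_iff.2 (hM.1 e he)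
  · rintro _ ⟨e, he, rfl⟩ _ ⟨f, hf, rfl⟩ hne _ hve hvf
    obtain ⟨x, hx, rfl⟩ := Sym2.mem_map.1 hve
    obtain ⟨y, hy, hyx⟩ := Sym2.mem_map.1 hvf
    exact hM.2 e he f hf (by rintro rfl; exact hne rfl) x hx (φ.injective hyx ▸ hy)

theorem image_sym2Map_symm_image_sym2Map (φ : G ≃g G') (M : Set (Sym2 V)) :
    Sym2.map φ.symm '' (Sym2.map φ '' M) = M := by
  simp [Set.image_image, Sym2.map_map]

theorem IsMaximalMatchingSet.map (φ : G ≃g G') (hM : IsMaximalMatchingSet G M) :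
    IsMaximalMatchingSet G' (Sym2.map φ '' M) := by
  refine ⟨hM.1.map φ, fun e he heM hins => ?_⟩
  refine hM.2 (Sym2.map φ.symm e) (φ.symm.map_mem_edgeSet_iff.2 he) ?_ ?_
  · intro h
    exact heM ⟨_, h, by simp [Sym2.map_map]⟩
  · simpa only [Set.image_insert_eq, image_sym2Map_symm_image_sym2Map] using hins.map φ.symm

theorem IsInducedMatchingSet.map (φ : G ≃g G') (hM : IsInducedMatchingSet G M) :
    IsInducedMatchingSet G' (Sym2.map φ '' M) := by
  rw [isInducedMatchingSet_iff] at hM ⊢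
  refine ⟨?_, ?_⟩
  · rintro _ ⟨e, he, rfl⟩
    exact φ.map_mem_edgeSet_iff.2 (hM.1 e he)
  rintro _ ⟨e, he, rfl⟩ _ ⟨f, hf, rfl⟩ hne _ hue _ hvf
  obtain ⟨x, hx, rfl⟩ := Sym2.mem_map.1 hue
  obtain ⟨y, hy, rfl⟩ := Sym2.mem_map.1 hvf
  rw [φ.map_adj_iff]
  exact hM.2 e he f hf (by rintro rfl; exact hne rfl) x hx y hy

theorem setOf_ncard_eq_of_iso (φ : G ≃g G') {P : Set (Sym2 V) → Prop}
    {P' : Set (Sym2 W) → Prop} (h : ∀ M, P M → P' (Sym2.map φ '' M))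
    (h' : ∀ M, P' M → P (Sym2.map φ.symm '' M)) :
    {n | ∃ M, P M ∧ M.ncard = n} = {n | ∃ M, P' M ∧ M.ncard = n} := by
  ext n
  constructor
  · rintro ⟨M, hM, rfl⟩
    exact ⟨_, h M hM, Set.ncard_image_of_injective M (Sym2.map.injective φ.injective)⟩
  · rintro ⟨M, hM, rfl⟩
    exact ⟨_, h' M hM, Set.ncard_image_of_injective M (Sym2.map.injective φ.symm.injective)⟩

theorem exists_isMaximalMatchingSet [Finite V] (G : SimpleGraph V) :
    ∃ M, IsMaximalMatchingSet G M := by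
  obtain ⟨M, hM, hmax⟩ := (Set.toFinite {M | IsMatchingSet G M}).exists_maximal
    ⟨∅, by simp [IsMatchingSet]⟩
  refine ⟨M, hM, fun e _ heM hins => heM ?_⟩
  exact (hmax hins (Set.subset_insert e M)) (Set.mem_insert e M)

theorem matchNum_congr (φ : G ≃g G') : matchNum G = matchNum G' :=
  congrArg sSup (setOf_ncard_eq_of_iso φ (fun _ h => h.map φ) (fun _ h => h.map φ.symm))

theorem minMatchNum_congr (φ : G ≃g G') : minMatchNum G = minMatchNum G' :=
  congrArg sInf (setOf_ncard_eq_of_iso φ (fun _ h => h.map φ) (fun _ h => h.map φ.symm))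

theorem indMatchNum_congr (φ : G ≃g G') : indMatchNum G = indMatchNum G' :=
  congrArg sSup (setOf_ncard_eq_of_iso φ (fun _ h => h.map φ) (fun _ h => h.map φ.symm))

theorem ncard_edgeSet_congr (φ : G ≃g G') : G.edgeSet.ncard = G'.edgeSet.ncard := by
  rw [← Nat.card_coe_set_eq, ← Nat.card_coe_set_eq, Nat.card_congr φ.mapEdgeSet]

end Matchings

namespace BicliqueStar

variable {ι : Type*} (s : ι → ℕ)

/-- `none` is the hub; `some ⟨i, false, j⟩` and `some ⟨i, true, k⟩` are the left and right
vertices of the `i`-th copy of `K_{s i, s i}`. -/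
abbrev Vert : Type _ := Option (Σ i : ι, Bool × Fin (s i))

/-- The hub is adjacent to the left vertex `0` of every copy. -/
def adj : Vert s → Vert s → Prop
  | none, none => False
  | none, some x | some x, none => x.2.1 = false ∧ (x.2.2 : ℕ) = 0
  | some x, some y => x.1 = y.1 ∧ x.2.1 ≠ y.2.1

def _root_.bicliqueStar : SimpleGraph (Vert s) where
  Adj := adj s
  symm := ⟨fun u v h => by
    rcases u with _ | ⟨i, _ | _, j⟩ <;> rcases v with _ | ⟨i', _ | _, j'⟩ <;>
      simp_all [adj, eq_comm]⟩
  loopless := ⟨fun u h => by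
    rcases u with _ | ⟨i, _ | _, j⟩ <;> simp [adj] at h⟩

variable {s}

def hub : Vert s := none
def left (i : ι) (j : Fin (s i)) : Vert s := some ⟨i, false, j⟩
def right (i : ι) (k : Fin (s i)) : Vert s := some ⟨i, true, k⟩

theorem vert_cases (v : Vert s) :
    v = hub ∨ (∃ i j, v = left i j) ∨ ∃ i k, v = right i k := by
  rcases v with _ | ⟨i, _ | _, j⟩
  exacts [Or.inl rfl, Or.inr (Or.inl ⟨i, j, rfl⟩), Or.inr (Or.inr ⟨i, j, rfl⟩)]

@[simp] theorem adj_hub_left {i : ι} {j : Fin (s i)} :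
    (bicliqueStar s).Adj hub (left i j) ↔ (j : ℕ) = 0 := by
  simp [bicliqueStar, adj, hub, left]

@[simp] theorem adj_left_hub {i : ι} {j : Fin (s i)} :
    (bicliqueStar s).Adj (left i j) hub ↔ (j : ℕ) = 0 := by
  simp [bicliqueStar, adj, hub, left]

@[simp] theorem adj_left_right {i i' : ι} {j : Fin (s i)} {k : Fin (s i')} :
    (bicliqueStar s).Adj (left i j) (right i' k) ↔ i = i' := by
  simp [bicliqueStar, adj, right, left]

@[simp] theorem adj_right_left {i i' : ι} {j : Fin (s i)} {k : Fin (s i')} :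
    (bicliqueStar s).Adj (right i' k) (left i j) ↔ i' = i := by
  simp [bicliqueStar, adj, right, left]

@[simp] theorem not_adj_left_left {i i' : ι} {j : Fin (s i)} {j' : Fin (s i')} :
    ¬ (bicliqueStar s).Adj (left i j) (left i' j') := by
  simp [bicliqueStar, adj, left]

@[simp] theorem not_adj_right_right {i i' : ι} {k : Fin (s i)} {k' : Fin (s i')} :
    ¬ (bicliqueStar s).Adj (right i k) (right i' k') := by
  simp [bicliqueStar, adj, right]

@[simp] theorem not_adj_hub_right {i : ι} {k : Fin (s i)} :
    ¬ (bicliqueStar s).Adj hub (right i k) := by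
  simp [bicliqueStar, adj, hub, right]

@[simp] theorem not_adj_right_hub {i : ι} {k : Fin (s i)} :
    ¬ (bicliqueStar s).Adj (right i k) hub := by
  simp [bicliqueStar, adj, hub, right]

theorem left_sigma_injective : Function.Injective (fun x : Σ i, Fin (s i) => left x.1 x.2) := by
  rintro ⟨i, j⟩ ⟨i', j'⟩ h
  simp only [left, Option.some.injEq, Sigma.mk.injEq] at h
  obtain ⟨rfl, h⟩ := h
  simp_all

theorem left_injective (i : ι) : Function.Injective (left (s := s) i) := by
  intro j j' h
  simpa [left] using h

theorem right_injective (i : ι) : Function.Injective (right (s := s) i) := by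
  intro k k' h
  simpa [right] using h

theorem exists_left_mem {e : Sym2 (Vert s)} (he : e ∈ (bicliqueStar s).edgeSet) :
    ∃ i j, left i j ∈ e := by
  induction e using Sym2.ind with
  | _ u v =>
    rcases vert_cases u with rfl | ⟨i, j, rfl⟩ | ⟨i, j, rfl⟩ <;>
      rcases vert_cases v with rfl | ⟨i', j', rfl⟩ | ⟨i', j', rfl⟩ <;>
      first
      | exact ⟨_, _, Sym2.mem_mk_left _ _⟩
      | exact ⟨_, _, Sym2.mem_mk_right _ _⟩
      | simp at he

variable (s) in
def leftVerts : Set (Vert s) := Set.range fun x : Σ i, Fin (s i) => left x.1 x.2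

theorem ncard_leftVerts [Fintype ι] : (leftVerts s).ncard = ∑ i, s i := by
  rw [leftVerts, Set.ncard_range_of_injective left_sigma_injective, Nat.card_sigma]
  simp

theorem ncard_le_sum_of_isMatchingSet [Fintype ι] {M : Set (Sym2 (Vert s))}
    (hM : IsMatchingSet (bicliqueStar s) M) : M.ncard ≤ ∑ i, s i := by
  rw [← ncard_leftVerts]
  refine hM.ncard_le_of_forall_exists_mem (Set.toFinite _) fun e he => ?_
  obtain ⟨i, j, hij⟩ := exists_left_mem (hM.1 e he)
  exact ⟨_, ⟨⟨i, j⟩, rfl⟩, hij⟩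

theorem exists_left_mem_of_isMaximalMatchingSet [Finite ι] {M : Set (Sym2 (Vert s))}
    (hM : IsMaximalMatchingSet (bicliqueStar s) M) (i : ι) (j : Fin (s i)) :
    ∃ e ∈ M, left i j ∈ e := by
  -- If `left i j` were exposed, maximality would match every right vertex of copy `i`, necessarily
  -- into the left side of copy `i`, which has the same size and so would be fully matched.
  by_contra hfree
  have hcard : (Set.range (left (s := s) i)).ncard ≤ (Set.range (right (s := s) i)).ncard := by
    rw [Set.ncard_range_of_injective (left_injective i),
      Set.ncard_range_of_injective (right_injective i)]
  have hnbhd : ∀ b ∈ Set.range (right i), ∀ v, (bicliqueStar s).Adj b v →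
      v ∈ Set.range (left (s := s) i) := by
    rintro _ ⟨k, rfl⟩ v hv
    rcases vert_cases v with rfl | ⟨i', j', rfl⟩ | ⟨i', j', rfl⟩
    · simp at hv
    · obtain rfl : i = i' := by simpa using hv
      exact ⟨j', rfl⟩
    · simp at hv
  have hsat : ∀ b ∈ Set.range (right i), ∃ e ∈ M, b ∈ e := by
    rintro _ ⟨k, rfl⟩
    have hadj : (bicliqueStar s).Adj (left i j) (right i k) := by simp
    exact (hM.exists_mem_of_adj hadj).resolve_left hfree
  exact hfree (hM.1.forall_exists_mem_of_neighbors_subset hcard hnbhd hsat _ ⟨j, rfl⟩)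

theorem ncard_eq_sum_of_isMaximalMatchingSet [Fintype ι] {M : Set (Sym2 (Vert s))}
    (hM : IsMaximalMatchingSet (bicliqueStar s) M) : M.ncard = ∑ i, s i := by
  refine le_antisymm (ncard_le_sum_of_isMatchingSet hM.1) ?_
  rw [← ncard_leftVerts]
  refine ncard_le_ncard_of_saturated_independent hM.1.1 (Set.toFinite _) ?_ ?_
  · rintro _ ⟨x, rfl⟩ _ ⟨y, rfl⟩
    simp
  · rintro _ ⟨⟨i, j⟩, rfl⟩
    exact exists_left_mem_of_isMaximalMatchingSet hM i j

theorem eq_of_left_mem_of_isInducedMatchingSet {M : Set (Sym2 (Vert s))}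
    (hM : IsInducedMatchingSet (bicliqueStar s) M) {e f : Sym2 (Vert s)} (he : e ∈ M)
    (hf : f ∈ M) {i : ι} {j j' : Fin (s i)} (hje : left i j ∈ e) (hjf : left i j' ∈ f) :
    e = f := by
  obtain ⟨hMG, hsep⟩ := isInducedMatchingSet_iff.1 hM
  by_contra hne
  specialize hsep e he f hf hne
  obtain ⟨w, rfl⟩ := Sym2.mem_iff_exists.1 hje
  obtain ⟨w', rfl⟩ := Sym2.mem_iff_exists.1 hjf
  have hw : (bicliqueStar s).Adj (left i j) w := hMG _ he
  have hw' : (bicliqueStar s).Adj (left i j') w' := hMG _ hf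
  clear hM hMG he hf hne
  rcases vert_cases w with rfl | ⟨i₁, j₁, rfl⟩ | ⟨i₁, k, rfl⟩ <;>
    rcases vert_cases w' with rfl | ⟨i₂, j₂, rfl⟩ | ⟨i₂, k', rfl⟩ <;>
    simp_all

theorem ncard_le_card_of_isInducedMatchingSet [Fintype ι] {M : Set (Sym2 (Vert s))}
    (hM : IsInducedMatchingSet (bicliqueStar s) M) : M.ncard ≤ Fintype.card ι := by
  rw [← Nat.card_eq_fintype_card, ← Set.ncard_univ]
  refine Set.ncard_le_ncard_of_forall_subsingleton (fun e i => ∃ j, left i j ∈ e) ?_ ?_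
    Set.finite_univ
  · intro e he
    obtain ⟨i, j, hij⟩ := exists_left_mem (hM.1.1 e he)
    exact ⟨i, Set.mem_univ i, j, hij⟩
  · rintro i - e ⟨he, j, hje⟩ f ⟨hf, j', hjf⟩
    exact eq_of_left_mem_of_isInducedMatchingSet hM he hf hje hjf

def diagEdge (hs : ∀ i, 0 < s i) (i : ι) : Sym2 (Vert s) :=
  s(left i ⟨0, hs i⟩, right i ⟨0, hs i⟩)

theorem isInducedMatchingSet_range_diagEdge (hs : ∀ i, 0 < s i) :
    IsInducedMatchingSet (bicliqueStar s) (Set.range (diagEdge hs)) := by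
  refine isInducedMatchingSet_iff.2 ⟨?_, ?_⟩
  · rintro _ ⟨i, rfl⟩
    simp [diagEdge]
  · rintro _ ⟨i, rfl⟩ _ ⟨i', rfl⟩ hne u hu v hv
    have hii' : i ≠ i' := by
      rintro rfl
      exact hne rfl
    simp only [diagEdge, Sym2.mem_iff] at hu hv
    rcases hu with rfl | rfl <;> rcases hv with rfl | rfl <;> simp [hii']

theorem diagEdge_injective (hs : ∀ i, 0 < s i) : Function.Injective (diagEdge hs) := by
  intro i i' h
  simp only [diagEdge, left, right, Sym2.eq_iff, Option.some.injEq, Sigma.mk.injEq] at h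
  rcases h with ⟨⟨h, -⟩, -⟩ | ⟨⟨h, -⟩, -⟩ <;> exact h

theorem indMatchNum_bicliqueStar [Fintype ι] (hs : ∀ i, 0 < s i) :
    indMatchNum (bicliqueStar s) = Fintype.card ι := by
  refine IsGreatest.csSup_eq ⟨⟨_, isInducedMatchingSet_range_diagEdge hs, ?_⟩, ?_⟩
  · rw [Set.ncard_range_of_injective (diagEdge_injective hs), Nat.card_eq_fintype_card]
  · rintro n ⟨M, hM, rfl⟩
    exact ncard_le_card_of_isInducedMatchingSet hM

theorem matchNum_bicliqueStar [Fintype ι] : matchNum (bicliqueStar s) = ∑ i, s i := by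
  obtain ⟨M, hM⟩ := exists_isMaximalMatchingSet (bicliqueStar s)
  refine IsGreatest.csSup_eq ⟨⟨M, hM.1, ncard_eq_sum_of_isMaximalMatchingSet hM⟩, ?_⟩
  rintro n ⟨M', hM', rfl⟩
  exact ncard_le_sum_of_isMatchingSet hM'

theorem minMatchNum_bicliqueStar [Fintype ι] : minMatchNum (bicliqueStar s) = ∑ i, s i := by
  obtain ⟨M, hM⟩ := exists_isMaximalMatchingSet (bicliqueStar s)
  refine IsLeast.csInf_eq ⟨⟨M, hM, ncard_eq_sum_of_isMaximalMatchingSet hM⟩, ?_⟩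
  rintro n ⟨M', hM', rfl⟩
  exact (ncard_eq_sum_of_isMaximalMatchingSet hM').ge

theorem bicliqueStar_connected (hs : ∀ i, 0 < s i) : (bicliqueStar s).Connected := by
  refine (SimpleGraph.connected_iff_exists_forall_reachable _).2 ⟨hub, fun v => ?_⟩
  have hhub : ∀ i, (bicliqueStar s).Reachable hub (left i ⟨0, hs i⟩) := fun i =>
    (by simp : (bicliqueStar s).Adj hub (left i ⟨0, hs i⟩)).reachable
  have hright : ∀ i k, (bicliqueStar s).Reachable hub (right i k) := fun i k =>
    (hhub i).trans (by simp : (bicliqueStar s).Adj (left i ⟨0, hs i⟩) (right i k)).reachable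
  rcases vert_cases v with rfl | ⟨i, j, rfl⟩ | ⟨i, k, rfl⟩
  · rfl
  · have hadj : (bicliqueStar s).Adj (right i ⟨0, hs i⟩) (left i j) := by simp
    exact (hright i ⟨0, hs i⟩).trans hadj.reachable
  · exact hright i k

def edgeCode (hs : ∀ i, 0 < s i) : (Σ i, Fin (s i) × Fin (s i)) ⊕ ι → Sym2 (Vert s)
  | .inl ⟨i, j, k⟩ => s(left i j, right i k)
  | .inr i => s(hub, left i ⟨0, hs i⟩)

theorem edgeSet_subset_range_edgeCode (hs : ∀ i, 0 < s i) :
    (bicliqueStar s).edgeSet ⊆ Set.range (edgeCode hs) := by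
  intro e he
  induction e using Sym2.ind with
  | _ u v =>
    rcases vert_cases u with rfl | ⟨i, j, rfl⟩ | ⟨i, j, rfl⟩ <;>
      rcases vert_cases v with rfl | ⟨i', j', rfl⟩ | ⟨i', j', rfl⟩ <;>
      simp at he
    · exact ⟨.inr i', by rw [edgeCode, show j' = ⟨0, hs i'⟩ from Fin.ext he]⟩
    · exact ⟨.inr i, by rw [edgeCode, Sym2.eq_swap, show j = ⟨0, hs i⟩ from Fin.ext he]⟩
    · subst he
      exact ⟨.inl ⟨i, j, j'⟩, rfl⟩
    · subst he
      exact ⟨.inl ⟨i, j', j⟩, Sym2.eq_swap⟩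

theorem ncard_edgeSet_bicliqueStar_le [Fintype ι] (hs : ∀ i, 0 < s i) :
    (bicliqueStar s).edgeSet.ncard ≤ ∑ i, s i ^ 2 + Fintype.card ι := by
  calc (bicliqueStar s).edgeSet.ncard ≤ (Set.range (edgeCode hs)).ncard :=
        Set.ncard_le_ncard (edgeSet_subset_range_edgeCode hs) (Set.toFinite _)
    _ ≤ Nat.card ((Σ i, Fin (s i) × Fin (s i)) ⊕ ι) := by
        rw [← Nat.card_coe_set_eq]
        exact Finite.card_range_le _
    _ = ∑ i, s i ^ 2 + Fintype.card ι := by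
        simp [sq]

end BicliqueStar

open BicliqueStar
theorem stmt_13_general (p q a b : ℕ) (hpq : p < q)
    (hab : q = a * p + b) (hb : b ≤ p - 1) :
    ∃ (n : ℕ) (G : SimpleGraph (Fin n)), G.Connected ∧
      indMatchNum G = p ∧ minMatchNum G = q ∧ matchNum G = q ∧
      G.edgeSet.ncard ≤ (a ^ 2 + 1) * p + (2 * a + 1) * b := by
  obtain ⟨c, rfl⟩ : ∃ c, p = b + c := ⟨p - b, by omega⟩
  have ha : 0 < a := Nat.pos_of_ne_zero (by rintro rfl; omega)
  let s : Fin b ⊕ Fin c → ℕ := Sum.elim (fun _ => a + 1) (fun _ => a)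
  have hs : ∀ i, 0 < s i := by
    rintro (i | i) <;> simp [s, ha]
  have hsum : ∑ i, s i = q := by
    simp only [Fintype.sum_sum_type, Sum.elim_inl, Sum.elim_inr, Finset.sum_const,
      Finset.card_univ, Fintype.card_fin, smul_eq_mul, hab, s]
    ring
  have hcard : Fintype.card (Fin b ⊕ Fin c) = b + c := by simp
  let φ := (bicliqueStar s).overFinIso rfl
  refine ⟨_, _, φ.connected_iff.1 (bicliqueStar_connected hs), ?_, ?_, ?_, ?_⟩
  · rw [← indMatchNum_congr φ, indMatchNum_bicliqueStar hs, hcard]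
  · rw [← minMatchNum_congr φ, minMatchNum_bicliqueStar, hsum]
  · rw [← matchNum_congr φ, matchNum_bicliqueStar, hsum]
  · rw [← ncard_edgeSet_congr φ]
    refine (ncard_edgeSet_bicliqueStar_le hs).trans_eq ?_
    simp only [Fintype.sum_sum_type, Sum.elim_inl, Sum.elim_inr, Finset.sum_const,
      Finset.card_univ, Fintype.card_fin, smul_eq_mul, Fintype.card_sum, s]
    ring

theorem stmt_13 (p q a b : ℕ) (hp : 2 ≤ p) (hpq : p < q)
    (hab : q = a * p + b) (hb : b ≤ p - 1) :
    ∃ (n : ℕ) (G : SimpleGraph (Fin n)), G.Connected ∧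
      indMatchNum G = p ∧ minMatchNum G = q ∧ matchNum G = q ∧
      G.edgeSet.ncard ≤ (a ^ 2 + 1) * p + (2 * a + 1) * b :=
  stmt_13_general p q a b hpq hab hb
end

section
/- Let p, q and r be integers with 2 ≤ p < q ≤ r ≤ 2q and 2q − p + 1 < r, and let a and b be the (unique) non-negative integers with r − q = a·(p − 2q + r) + b and 0 ≤ b ≤ p − 2q + r − 1. Then there exists a finite connected simple graph G with ind-match(G) = p, min-match(G) = q, match(G) = r, and at most p + 2q − r + (p − 2q + r)·(2a + 1 choose 2) + b(4a + 3) edges. -/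
variable {V : Type*}

/-! Build the graph from blocks: block `i` is a clique `K_{t i}` with a pendant leaf at every
vertex, and one vertex of each clique is joined to a common apex. Every edge contains a clique
vertex, so the pendant edges form a maximum matching, of size `∑ t i`. Two clique vertices of
one block are adjacent, so an induced matching has at most one edge per block, and the pendant
edges at the apex-neighbours form an induced matching with one edge per block. A maximal
matching has to cover every clique vertex (or a pendant edge could be added), hence uses at
least `⌈t i / 2⌉` edges inside block `i`, and pairing up consecutive clique vertices attains
this. Besides one apex edge, block `i` has `(t i + 1).choose 2` edges. Taking `2q - r`
blocks of size `1`, `p + r - 2q - b` blocks of size `2a` and `b` blocks of size `2a + 2`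
gives the parameters `p`, `q`, `r`. -/

open Finset

theorem sigma_fin_ext {κ : Type*} {t : κ → ℕ} {k k' : Σ i, Fin (t i)} (h₁ : k.1 = k'.1)
    (h₂ : (k.2 : ℕ) = k'.2) : k = k' :=
  Sigma.ext h₁ ((Fin.heq_ext_iff (congrArg t h₁)).2 h₂)

section Matchings

variable {G : SimpleGraph V} {M : Set (Sym2 V)}

theorem isMaximalMatchingSet_iff :
    IsMaximalMatchingSet G M ↔
      IsMatchingSet G M ∧ ∀ e ∈ G.edgeSet, ∃ v ∈ e, ∃ f ∈ M, v ∈ f := by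
  refine ⟨fun ⟨hM, hmax⟩ => ⟨hM, fun e he => ?_⟩, fun ⟨hM, hdom⟩ => ⟨hM, ?_⟩⟩
  · by_cases heM : e ∈ M
    · exact ⟨_, Sym2.out_fst_mem e, e, heM, Sym2.out_fst_mem e⟩
    by_contra! hfree
    refine hmax e he heM ⟨?_, ?_⟩
    · rintro f (rfl | hf)
      exacts [he, hM.1 f hf]
    · rintro f (rfl | hf) g (rfl | hg) hne v hvf hvg
      · exact hne rfl
      · exact hfree v hvf g hg hvg
      · exact hfree v hvg f hf hvf
      · exact hM.2 f hf g hg hne v hvf hvg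
  · intro e he heM hins
    obtain ⟨v, hve, f, hf, hvf⟩ := hdom e he
    exact hins.2 e (Set.mem_insert e M) f (Set.mem_insert_of_mem e hf)
      (fun hef => heM (hef ▸ hf)) v hve hvf

theorem IsMaximalMatchingSet.exists_mem_of_pendant {u w : V} (hM : IsMaximalMatchingSet G M)
    (huw : G.Adj u w) (hw : ∀ z, G.Adj w z → z = u) : ∃ f ∈ M, u ∈ f := by
  obtain ⟨v, hv, f, hf, hvf⟩ := (isMaximalMatchingSet_iff.1 hM).2 s(u, w) huw
  rcases Sym2.mem_iff.1 hv with rfl | rfl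
  · exact ⟨f, hf, hvf⟩
  have hadj : G.Adj v (Sym2.Mem.other hvf) := by
    rw [← SimpleGraph.mem_edgeSet, Sym2.other_spec]
    exact hM.1.1 f hf
  refine ⟨f, hf, ?_⟩
  rw [← Sym2.other_spec hvf, hw _ hadj]
  exact Sym2.mem_mk_right v u

theorem IsMatchingSet.ncard_le_card {ι : Type*} [Finite ι] (x : ι → V)
    (hM : IsMatchingSet G M) (hx : ∀ e ∈ M, ∃ k, x k ∈ e) : M.ncard ≤ Nat.card ι := by
  choose σ hσ using fun e : M => hx e e.2
  rw [← Nat.card_coe_set_eq]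
  refine Nat.card_le_card_of_injective σ fun e f hef => ?_
  by_contra hne
  exact hM.2 e e.2 f f.2 (Subtype.coe_ne_coe.2 hne) _ (hσ e) (hef ▸ hσ f)

theorem IsInducedMatchingSet.ncard_le_card {ι β : Type*} [Finite β] (x : ι → V)
    (blk : ι → β) (hM : IsInducedMatchingSet G M) (hx : ∀ e ∈ M, ∃ k, x k ∈ e)
    (hadj : ∀ k k', blk k = blk k' → x k ≠ x k' → G.Adj (x k) (x k')) :
    M.ncard ≤ Nat.card β := by
  choose σ hσ using fun e : M => hx e e.2
  rw [← Nat.card_coe_set_eq]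
  refine Nat.card_le_card_of_injective (blk ∘ σ) fun e f hef => ?_
  by_contra hne
  have hne' : (e : Sym2 V) ≠ f := Subtype.coe_ne_coe.2 hne
  by_cases hxx : x (σ e) = x (σ f)
  · exact hM.1.2 e e.2 f f.2 hne' _ (hσ e) (hxx ▸ hσ f)
  · exact hM.2 e e.2 f f.2 hne' _ (hadj _ _ hef hxx)
      ⟨⟨_, Sym2.mem_mk_left _ _, hσ e⟩, ⟨_, Sym2.mem_mk_right _ _, hσ f⟩⟩

theorem Finset.card_le_two_mul_card_of_forall_exists_mem [DecidableEq V] {S : Finset V}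
    {F : Finset (Sym2 V)} (h : ∀ v ∈ S, ∃ e ∈ F, v ∈ e) : #S ≤ 2 * #F :=
  calc #S ≤ #(F.biUnion Sym2.toFinset) := card_le_card fun v hv => by
        obtain ⟨e, he, hve⟩ := h v hv
        exact mem_biUnion.2 ⟨e, he, Sym2.mem_toFinset.2 hve⟩
    _ ≤ #F * 2 := card_biUnion_le_card_mul _ _ _ fun e _ => by
        rw [Sym2.card_toFinset]; split_ifs <;> omega
    _ = 2 * #F := mul_comm _ _

theorem sum_div_two_le_ncard_of_cover [Finite V] {κ : Type*} [Fintype κ] {t : κ → ℕ}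
    {x : (Σ i, Fin (t i)) → V} (hx : Function.Injective x) (hcov : ∀ k, ∃ e ∈ M, x k ∈ e)
    (hblk : ∀ e ∈ M, ∀ k k', x k ∈ e → x k' ∈ e → k.1 = k'.1) :
    ∑ i, (t i + 1) / 2 ≤ M.ncard := by
  classical
  obtain ⟨F, rfl⟩ := (Set.toFinite M).exists_finset_coe
  rw [Set.ncard_coe_finset]
  let block (i : κ) : Finset (Sym2 V) := {e ∈ F | ∃ j, x ⟨i, j⟩ ∈ e}
  have hblock (i : κ) : t i ≤ 2 * #(block i) := by
    have hinj : Function.Injective fun j : Fin (t i) => x ⟨i, j⟩ :=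
      hx.comp sigma_mk_injective
    calc t i = #(univ.image fun j : Fin (t i) => x ⟨i, j⟩) := by
          rw [card_image_of_injective _ hinj, card_univ, Fintype.card_fin]
      _ ≤ 2 * #(block i) := card_le_two_mul_card_of_forall_exists_mem <| by
          simp only [mem_image, mem_univ, true_and, forall_exists_index,
            forall_apply_eq_imp_iff]
          intro j
          obtain ⟨e, he, hje⟩ := hcov ⟨i, j⟩
          exact ⟨e, mem_filter.2 ⟨he, j, hje⟩, hje⟩
  have hdisj : ((univ : Finset κ) : Set κ).PairwiseDisjoint block := by
    intro i _ i' _ hii'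
    refine disjoint_left.2 fun e hi hi' => hii' ?_
    obtain ⟨he, j, hj⟩ := mem_filter.1 hi
    obtain ⟨-, j', hj'⟩ := mem_filter.1 hi'
    exact hblk e he ⟨i, j⟩ ⟨i', j'⟩ hj hj'
  calc ∑ i, (t i + 1) / 2 ≤ ∑ i, #(block i) :=
        sum_le_sum fun i _ => by have := hblock i; omega
    _ = #(univ.biUnion block) := (card_biUnion hdisj).symm
    _ ≤ #F := card_le_card (biUnion_subset.2 fun _ _ => filter_subset _ _)

end Matchings

section Isomorphism

variable {W : Type*} {G : SimpleGraph V} {H : SimpleGraph W}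

theorem SimpleGraph.Iso.mem_sym2Map (f : G ≃g H) {e : Sym2 V} {w : W} :
    w ∈ Sym2.map f e ↔ f.symm w ∈ e := by
  rw [Sym2.mem_map]
  exact ⟨by rintro ⟨v, hv, rfl⟩; simpa using hv, fun h => ⟨_, h, by simp⟩⟩

theorem SimpleGraph.Iso.sym2Map_sym2Map_symm (f : G ≃g H) (e : Sym2 W) :
    Sym2.map f (Sym2.map f.symm e) = e := by
  simp [Sym2.map_map]

theorem IsMatchingSet.map_iso {f : G ≃g H} {M : Set (Sym2 V)} (hM : IsMatchingSet G M) :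
    IsMatchingSet H (Sym2.map f '' M) := by
  refine ⟨?_, ?_⟩
  · rintro _ ⟨e, he, rfl⟩
    exact f.map_mem_edgeSet_iff.2 (hM.1 e he)
  · rintro _ ⟨e, he, rfl⟩ _ ⟨g, hg, rfl⟩ hne w hwe hwg
    rw [f.mem_sym2Map] at hwe hwg
    exact hM.2 e he g hg (fun h => hne (h ▸ rfl)) _ hwe hwg

theorem IsInducedMatchingSet.map_iso {f : G ≃g H} {M : Set (Sym2 V)}
    (hM : IsInducedMatchingSet G M) :
    IsInducedMatchingSet H (Sym2.map f '' M) := by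
  refine ⟨hM.1.map_iso, ?_⟩
  rintro _ ⟨e, he, rfl⟩ _ ⟨g, hg, rfl⟩ hne d hd ⟨⟨v, hvd, hve⟩, ⟨w, hwd, hwg⟩⟩
  rw [f.mem_sym2Map] at hve hwg
  refine hM.2 e he g hg (fun h => hne (h ▸ rfl)) (Sym2.map f.symm d)
    (f.symm.map_mem_edgeSet_iff.2 hd) ⟨⟨_, ?_, hve⟩, ⟨_, ?_, hwg⟩⟩ <;>
    exact Sym2.mem_map.2 ⟨_, ‹_›, rfl⟩

theorem IsMaximalMatchingSet.map_iso {f : G ≃g H} {M : Set (Sym2 V)}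
    (hM : IsMaximalMatchingSet G M) :
    IsMaximalMatchingSet H (Sym2.map f '' M) := by
  obtain ⟨hM, hdom⟩ := isMaximalMatchingSet_iff.1 hM
  refine isMaximalMatchingSet_iff.2 ⟨hM.map_iso, fun d hd => ?_⟩
  obtain ⟨v, hv, e, he, hve⟩ := hdom _ (f.symm.map_mem_edgeSet_iff.2 hd)
  refine ⟨f v, ?_, Sym2.map f e, ⟨e, he, rfl⟩, Sym2.mem_map.2 ⟨v, hve, rfl⟩⟩
  rw [← f.sym2Map_sym2Map_symm d]
  exact Sym2.mem_map.2 ⟨v, hv, rfl⟩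

theorem SimpleGraph.Iso.ncard_image_sym2Map (f : G ≃g H) (M : Set (Sym2 V)) :
    (Sym2.map f '' M).ncard = M.ncard :=
  Set.ncard_image_of_injective M (Sym2.map.injective f.injective)

theorem SimpleGraph.Iso.setOf_ncard_eq (f : G ≃g H) {P : Set (Sym2 V) → Prop}
    {Q : Set (Sym2 W) → Prop} (hPQ : ∀ M, P M → Q (Sym2.map f '' M))
    (hQP : ∀ M, Q M → P (Sym2.map f.symm '' M)) :
    {n | ∃ M, P M ∧ M.ncard = n} = {n | ∃ M, Q M ∧ M.ncard = n} := by
  ext n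
  constructor
  · rintro ⟨M, hM, rfl⟩
    exact ⟨_, hPQ M hM, f.ncard_image_sym2Map M⟩
  · rintro ⟨M, hM, rfl⟩
    exact ⟨_, hQP M hM, f.symm.ncard_image_sym2Map M⟩

theorem SimpleGraph.Iso.matchNum_eq (f : G ≃g H) : matchNum G = matchNum H :=
  congrArg sSup (f.setOf_ncard_eq (fun _ h => h.map_iso) fun _ h => h.map_iso)

theorem SimpleGraph.Iso.minMatchNum_eq (f : G ≃g H) : minMatchNum G = minMatchNum H :=
  congrArg sInf (f.setOf_ncard_eq (fun _ h => h.map_iso) fun _ h => h.map_iso)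

theorem SimpleGraph.Iso.indMatchNum_eq (f : G ≃g H) : indMatchNum G = indMatchNum H :=
  congrArg sSup (f.setOf_ncard_eq (fun _ h => h.map_iso) fun _ h => h.map_iso)

theorem SimpleGraph.Iso.ncard_edgeSet_eq (f : G ≃g H) : G.edgeSet.ncard = H.edgeSet.ncard :=
  Nat.card_congr f.mapEdgeSet

end Isomorphism

namespace BlockGraph

variable {κ : Type*} {t : κ → ℕ}

abbrev Vertex (t : κ → ℕ) : Type _ := Option ((Σ i, Fin (t i)) × Bool)

def core (k : Σ i, Fin (t i)) : Vertex t := some (k, false)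

def leaf (k : Σ i, Fin (t i)) : Vertex t := some (k, true)

def leafEdge (k : Σ i, Fin (t i)) : Sym2 (Vertex t) := s(core k, leaf k)

inductive Link : Vertex t → Vertex t → Prop
  | apex (k : Σ i, Fin (t i)) : (k.2 : ℕ) = 0 → Link none (core k)
  | leaf (k : Σ i, Fin (t i)) : Link (core k) (leaf k)
  | clique (k k' : Σ i, Fin (t i)) : k.1 = k'.1 → Link (core k) (core k')

def _root_.blockGraph (t : κ → ℕ) : SimpleGraph (Vertex t) :=
  SimpleGraph.fromRel Link

theorem core_injective : Function.Injective (core (t := t)) := fun _ _ h => by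
  simpa [core] using h

theorem core_adj_leaf (k : Σ i, Fin (t i)) : (blockGraph t).Adj (core k) (leaf k) :=
  (SimpleGraph.fromRel_adj _ _ _).2 ⟨by simp [core, leaf], Or.inl (.leaf k)⟩

theorem core_adj_core {k k' : Σ i, Fin (t i)} (h : k.1 = k'.1) (hne : core k ≠ core k') :
    (blockGraph t).Adj (core k) (core k') :=
  (SimpleGraph.fromRel_adj _ _ _).2 ⟨hne, Or.inl (.clique k k' h)⟩

theorem apex_adj_core {k : Σ i, Fin (t i)} (h : (k.2 : ℕ) = 0) :
    (blockGraph t).Adj none (core k) :=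
  (SimpleGraph.fromRel_adj _ _ _).2 ⟨by simp [core], Or.inl (.apex k h)⟩

theorem exists_link {e : Sym2 (Vertex t)} (he : e ∈ (blockGraph t).edgeSet) :
    ∃ u v, Link u v ∧ e = s(u, v) := by
  induction e using Sym2.ind with
  | _ u v =>
    obtain ⟨-, h | h⟩ := (SimpleGraph.fromRel_adj _ _ _).1 he
    exacts [⟨u, v, h, rfl⟩, ⟨v, u, h, Sym2.eq_swap⟩]

theorem eq_core_of_adj_leaf {k : Σ i, Fin (t i)} {w : Vertex t}
    (h : (blockGraph t).Adj (leaf k) w) : w = core k := by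
  rcases (SimpleGraph.fromRel_adj _ _ _).1 h with ⟨-, h | h⟩ <;> cases h
  simp_all [core, leaf]

theorem exists_core_mem {e : Sym2 (Vertex t)} (he : e ∈ (blockGraph t).edgeSet) :
    ∃ k, core k ∈ e := by
  obtain ⟨u, v, h, rfl⟩ := exists_link he
  cases h with
  | apex k _ => exact ⟨k, Sym2.mem_mk_right _ _⟩
  | leaf k => exact ⟨k, Sym2.mem_mk_left _ _⟩
  | clique k _ _ => exact ⟨k, Sym2.mem_mk_left _ _⟩

theorem fst_eq_of_mem_edge {e : Sym2 (Vertex t)} (he : e ∈ (blockGraph t).edgeSet)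
    {k k' : Σ i, Fin (t i)} {β β' : Bool} (hk : some (k, β) ∈ e)
    (hk' : some (k', β') ∈ e) :
    k.1 = k'.1 := by
  obtain ⟨u, v, h, rfl⟩ := exists_link he
  cases h <;> simp only [Sym2.mem_iff, core, leaf, reduceCtorEq, false_or, Option.some.injEq,
    Prod.mk.injEq] at hk hk' <;> grind

theorem blockGraph_connected : (blockGraph t).Connected := by
  have hcore (k : Σ i, Fin (t i)) : (blockGraph t).Reachable (core k) none := by
    by_cases hk : (k.2 : ℕ) = 0
    · exact (apex_adj_core hk).symm.reachable
    let k₀ : Σ i, Fin (t i) := ⟨k.1, ⟨0, by omega⟩⟩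
    have hne : core k ≠ core k₀ := core_injective.ne fun h => hk (by rw [h])
    exact (core_adj_core (k := k) (k' := k₀) rfl hne).reachable.trans
      (apex_adj_core rfl).symm.reachable
  have hall (v : Vertex t) : (blockGraph t).Reachable v none := by
    rcases v with _ | ⟨k, _ | _⟩
    · exact .rfl
    · exact hcore k
    · exact (core_adj_leaf k).symm.reachable.trans (hcore k)
  exact ⟨fun u v => (hall u).trans (hall v).symm⟩

theorem mem_leafEdge {k : Σ i, Fin (t i)} {v : Vertex t} :
    v ∈ leafEdge k ↔ ∃ β, v = some (k, β) := by
  simp only [leafEdge, Sym2.mem_iff, core, leaf]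
  exact ⟨by rintro (rfl | rfl) <;> exact ⟨_, rfl⟩,
    by rintro ⟨_ | _, rfl⟩ <;> simp⟩

theorem leafEdge_injective : Function.Injective (leafEdge (t := t)) := fun k k' h => by
  obtain ⟨β, hβ⟩ := mem_leafEdge.1 (h ▸ mem_leafEdge.2 ⟨false, rfl⟩)
  simpa using congrArg (Option.map Prod.fst) hβ

theorem isMatchingSet_image_leafEdge (s : Set (Σ i, Fin (t i))) :
    IsMatchingSet (blockGraph t) (leafEdge '' s) := by
  refine ⟨?_, ?_⟩
  · rintro _ ⟨k, -, rfl⟩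
    exact core_adj_leaf k
  · rintro _ ⟨k, -, rfl⟩ _ ⟨k', -, rfl⟩ hne v hv hv'
    obtain ⟨β, rfl⟩ := mem_leafEdge.1 hv
    obtain ⟨β', hβ'⟩ := mem_leafEdge.1 hv'
    exact hne (by simp_all)

theorem matchNum_blockGraph [Fintype κ] : matchNum (blockGraph t) = ∑ i, t i := by
  refine IsGreatest.csSup_eq
    ⟨⟨leafEdge '' Set.univ, isMatchingSet_image_leafEdge _, ?_⟩, ?_⟩
  · rw [Set.ncard_image_of_injective _ leafEdge_injective, Set.ncard_univ,
      Nat.card_eq_fintype_card, Fintype.card_sigma]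
    simp
  · rintro _ ⟨M, hM, rfl⟩
    simpa using hM.ncard_le_card core fun e he => exists_core_mem (hM.1 e he)

theorem indMatchNum_blockGraph [Fintype κ] (ht : ∀ i, 0 < t i) :
    indMatchNum (blockGraph t) = Fintype.card κ := by
  let k₀ (i : κ) : Σ i, Fin (t i) := ⟨i, ⟨0, ht i⟩⟩
  have hk₀ : Function.Injective k₀ := fun i i' h => congrArg Sigma.fst h
  refine IsGreatest.csSup_eq
    ⟨⟨leafEdge '' Set.range k₀, ⟨isMatchingSet_image_leafEdge _, ?_⟩, ?_⟩, ?_⟩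
  · rintro _ ⟨_, ⟨i, rfl⟩, rfl⟩ _ ⟨_, ⟨i', rfl⟩, rfl⟩ hne d hd
      ⟨⟨v, hvd, hv⟩, ⟨w, hwd, hw⟩⟩
    obtain ⟨β, rfl⟩ := mem_leafEdge.1 hv
    obtain ⟨β', rfl⟩ := mem_leafEdge.1 hw
    have : i = i' := fst_eq_of_mem_edge hd hvd hwd
    exact hne (by rw [this])
  · rw [Set.ncard_image_of_injective _ leafEdge_injective, Set.ncard_range_of_injective hk₀,
      Nat.card_eq_fintype_card]
  · rintro _ ⟨M, hM, rfl⟩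
    simpa using hM.ncard_le_card core Sigma.fst (fun e he => exists_core_mem (hM.1.1 e he))
      fun k k' h hne => core_adj_core h hne

def pairEdge (l : Σ i, Fin ((t i + 1) / 2)) : Sym2 (Vertex t) :=
  if h : 2 * (l.2 : ℕ) + 1 < t l.1 then
    s(core ⟨l.1, ⟨2 * l.2, by omega⟩⟩, core ⟨l.1, ⟨2 * l.2 + 1, h⟩⟩)
  else leafEdge ⟨l.1, ⟨2 * l.2, by have := l.2.isLt; omega⟩⟩

theorem mem_pairEdge {l : Σ i, Fin ((t i + 1) / 2)} {v : Vertex t} (hv : v ∈ pairEdge l) :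
    ∃ k β, v = some (k, β) ∧ k.1 = l.1 ∧ (k.2 : ℕ) / 2 = l.2 := by
  unfold pairEdge at hv
  split at hv
  · rcases Sym2.mem_iff.1 hv with rfl | rfl <;>
      exact ⟨_, false, rfl, rfl, by dsimp only; omega⟩
  · obtain ⟨β, rfl⟩ := mem_leafEdge.1 hv
    exact ⟨_, β, rfl, rfl, by simp⟩

theorem eq_of_mem_pairEdge {l l' : Σ i, Fin ((t i + 1) / 2)} {v : Vertex t}
    (hv : v ∈ pairEdge l) (hv' : v ∈ pairEdge l') : l = l' := by
  obtain ⟨k, β, rfl, h₁, h₂⟩ := mem_pairEdge hv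
  obtain ⟨k', β', hkk', h₁', h₂'⟩ := mem_pairEdge hv'
  obtain ⟨rfl, -⟩ := Prod.mk.inj (Option.some.inj hkk')
  exact sigma_fin_ext (h₁.symm.trans h₁') (h₂.symm.trans h₂')

theorem pairEdge_mem_edgeSet (l : Σ i, Fin ((t i + 1) / 2)) :
    pairEdge l ∈ (blockGraph t).edgeSet := by
  unfold pairEdge
  split
  · exact core_adj_core rfl (core_injective.ne (by simp))
  · exact core_adj_leaf _

theorem core_mem_pairEdge (k : Σ i, Fin (t i)) :
    core k ∈ pairEdge ⟨k.1, ⟨k.2 / 2, by omega⟩⟩ := by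
  unfold pairEdge
  dsimp only
  split_ifs with h
  · rcases Nat.even_or_odd' (k.2 : ℕ) with ⟨m, hm | hm⟩
    · exact Sym2.mem_iff.2 (.inl (congrArg core (sigma_fin_ext rfl (by simp; omega))))
    · exact Sym2.mem_iff.2 (.inr (congrArg core (sigma_fin_ext rfl (by simp; omega))))
  · exact mem_leafEdge.2 ⟨false, congrArg core (sigma_fin_ext rfl (by simp; omega))⟩

theorem isMaximalMatchingSet_range_pairEdge :
    IsMaximalMatchingSet (blockGraph t) (Set.range pairEdge) := by
  refine isMaximalMatchingSet_iff.2 ⟨⟨?_, ?_⟩, fun e he => ?_⟩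
  · rintro _ ⟨l, rfl⟩
    exact pairEdge_mem_edgeSet l
  · rintro _ ⟨l, rfl⟩ _ ⟨l', rfl⟩ hne v hv hv'
    exact hne (congrArg pairEdge (eq_of_mem_pairEdge hv hv'))
  · obtain ⟨k, hk⟩ := exists_core_mem he
    exact ⟨core k, hk, _, ⟨_, rfl⟩, core_mem_pairEdge k⟩

theorem minMatchNum_blockGraph [Fintype κ] :
    minMatchNum (blockGraph t) = ∑ i, (t i + 1) / 2 := by
  refine IsLeast.csInf_eq ⟨⟨_, isMaximalMatchingSet_range_pairEdge, ?_⟩, ?_⟩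
  · have hinj : Function.Injective (pairEdge (t := t)) := fun l l' h =>
      eq_of_mem_pairEdge (Sym2.out_fst_mem _) (h ▸ Sym2.out_fst_mem _)
    rw [Set.ncard_range_of_injective hinj, Nat.card_eq_fintype_card, Fintype.card_sigma]
    simp
  · rintro _ ⟨M, hM, rfl⟩
    exact sum_div_two_le_ncard_of_cover core_injective
      (fun k => hM.exists_mem_of_pendant (core_adj_leaf k) fun _ => eq_core_of_adj_leaf)
      fun e he _ _ hk hk' => fst_eq_of_mem_edge (hM.1.1 e he) hk hk'

/-- Codes every edge, block `i` by `Sym2 (Fin (t i))` (with `(t i + 1).choose 2` elements)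
plus one apex edge; this is where the binomial coefficients of the edge bound come from. -/
def edgeCode (ht : ∀ i, 0 < t i) : κ ⊕ (Σ i, Sym2 (Fin (t i))) → Sym2 (Vertex t)
  | .inl i => s(none, core ⟨i, ⟨0, ht i⟩⟩)
  | .inr ⟨i, z⟩ => Sym2.lift ⟨fun j j' =>
      if j = j' then leafEdge ⟨i, j⟩ else s(core ⟨i, j⟩, core ⟨i, j'⟩),
      fun j j' => by dsimp only; split_ifs <;> simp_all [Sym2.eq_swap]⟩ z

theorem edgeSet_subset_range_edgeCode (ht : ∀ i, 0 < t i) :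
    (blockGraph t).edgeSet ⊆ Set.range (edgeCode ht) := by
  intro e he
  obtain ⟨u, v, h, rfl⟩ := exists_link he
  cases h with
  | apex k hk =>
    exact ⟨.inl k.1, congrArg (fun k => s(none, core k))
      (sigma_fin_ext (k := ⟨k.1, ⟨0, ht k.1⟩⟩) rfl hk.symm)⟩
  | leaf k => exact ⟨.inr ⟨k.1, s(k.2, k.2)⟩, by simp [edgeCode, leafEdge]⟩
  | clique k k' hkk' =>
    obtain ⟨i, j⟩ := k
    obtain ⟨i', j'⟩ := k'
    obtain rfl : i = i' := hkk'
    have hjj' : j ≠ j' := by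
      rintro rfl
      exact ((SimpleGraph.fromRel_adj _ _ _).1 he).1 rfl
    exact ⟨.inr ⟨i, s(j, j')⟩, by simp [edgeCode, hjj']⟩

theorem ncard_edgeSet_blockGraph_le [Fintype κ] (ht : ∀ i, 0 < t i) :
    (blockGraph t).edgeSet.ncard ≤ Fintype.card κ + ∑ i, (t i + 1).choose 2 :=
  calc (blockGraph t).edgeSet.ncard
      ≤ (Set.range (edgeCode ht)).ncard := Set.ncard_le_ncard (edgeSet_subset_range_edgeCode ht)
    _ ≤ Nat.card (κ ⊕ (Σ i, Sym2 (Fin (t i)))) := by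
      rw [← Set.image_univ, ← Set.ncard_univ]; exact Set.ncard_image_le
    _ = Fintype.card κ + ∑ i, (t i + 1).choose 2 := by
      simp [Nat.card_eq_fintype_card, Sym2.card]

end BlockGraph

open BlockGraph

theorem exists_fin_graph_of_blocks {κ : Type*} [Fintype κ] (t : κ → ℕ)
    (ht : ∀ i, 0 < t i) :
    ∃ (n : ℕ) (G : SimpleGraph (Fin n)), G.Connected ∧
      indMatchNum G = Fintype.card κ ∧ minMatchNum G = ∑ i, (t i + 1) / 2 ∧
      matchNum G = ∑ i, t i ∧
      G.edgeSet.ncard ≤ Fintype.card κ + ∑ i, (t i + 1).choose 2 := by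
  let f := (blockGraph t).overFinIso rfl
  refine ⟨_, _, f.connected_iff.1 blockGraph_connected, ?_, ?_, ?_, ?_⟩
  · rw [← f.indMatchNum_eq, indMatchNum_blockGraph ht]
  · rw [← f.minMatchNum_eq, minMatchNum_blockGraph]
  · rw [← f.matchNum_eq, matchNum_blockGraph]
  · rw [← f.ncard_edgeSet_eq]
    exact ncard_edgeSet_blockGraph_le ht

theorem exists_fin_graph_of_block_sizes (a b c m : ℕ) (ha : 0 < a) :
    ∃ (n : ℕ) (G : SimpleGraph (Fin n)), G.Connected ∧
      indMatchNum G = c + (m + b) ∧ minMatchNum G = c + (a * (m + b) + b) ∧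
      matchNum G = c + 2 * (a * (m + b) + b) ∧
      G.edgeSet.ncard ≤ c + (m + b) + c + (m + b) * (2 * a + 1).choose 2 + b * (4 * a + 3) := by
  let t : Fin c ⊕ Fin m ⊕ Fin b → ℕ :=
    Sum.elim (fun _ => 1) (Sum.elim (fun _ => 2 * a) fun _ => 2 * a + 2)
  obtain ⟨n, G, hG, hind, hmin, hmatch, hedges⟩ :=
    exists_fin_graph_of_blocks t (by rintro (_ | _ | _) <;> simp [t, ha])
  have hchoose : (2 * a + 2 + 1).choose 2 = (2 * a + 1).choose 2 + (4 * a + 3) := by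
    rw [Nat.choose_succ_succ' (2 * a + 2) 1, Nat.choose_succ_succ' (2 * a + 1) 1,
      Nat.choose_one_right, Nat.choose_one_right]
    ring
  refine ⟨n, G, hG, by simp [hind], ?_, ?_, hedges.trans_eq ?_⟩
  · rw [hmin]
    simp only [t, Fintype.sum_sum_type, Sum.elim_inl, Sum.elim_inr, sum_const, card_univ,
      Fintype.card_fin, smul_eq_mul, Nat.reduceAdd, Nat.reduceDiv,
      show (2 * a + 1) / 2 = a by omega, show (2 * a + 2 + 1) / 2 = a + 1 by omega]
    ring
  · rw [hmatch]
    simp only [t, Fintype.sum_sum_type, Sum.elim_inl, Sum.elim_inr, sum_const, card_univ,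
      Fintype.card_fin, smul_eq_mul]
    ring
  · simp only [t, Fintype.card_sum, Fintype.sum_sum_type, Sum.elim_inl, Sum.elim_inr, sum_const,
      card_univ, Fintype.card_fin, smul_eq_mul, Nat.reduceAdd, Nat.choose_self, hchoose]
    ring

theorem stmt_15_general (p q r a b : ℕ) (hpq : p < q)
    (hr2q : r ≤ 2 * q) (hr : 2 * q - p + 1 < r)
    (hab : r - q = a * (p + r - 2 * q) + b) (hb : b ≤ p + r - 2 * q - 1) :
    ∃ (n : ℕ) (G : SimpleGraph (Fin n)), G.Connected ∧
      indMatchNum G = p ∧ minMatchNum G = q ∧ matchNum G = r ∧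
      G.edgeSet.ncard ≤
        p + (2 * q - r) + (p + r - 2 * q) * Nat.choose (2 * a + 1) 2
          + b * (4 * a + 3) := by
  obtain ⟨m, hm⟩ : ∃ m, p + r - 2 * q = m + b := ⟨p + r - 2 * q - b, by omega⟩
  rw [hm] at hab ⊢
  have ha : 0 < a := Nat.pos_of_ne_zero (by rintro rfl; omega)
  have hp : p = (2 * q - r) + (m + b) := by omega
  have hq : q = (2 * q - r) + (a * (m + b) + b) := by omega
  have hr' : r = (2 * q - r) + 2 * (a * (m + b) + b) := by omega
  obtain ⟨n, G, hG, hind, hmin, hmatch, hedges⟩ :=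
    exists_fin_graph_of_block_sizes a b (2 * q - r) m ha
  exact ⟨n, G, hG, hind.trans hp.symm, hmin.trans hq.symm, hmatch.trans hr'.symm, hp ▸ hedges⟩

theorem stmt_15 (p q r a b : ℕ) (hp : 2 ≤ p) (hpq : p < q) (hqr : q ≤ r)
    (hr2q : r ≤ 2 * q) (hr : 2 * q - p + 1 < r)
    (hab : r - q = a * (p + r - 2 * q) + b) (hb : b ≤ p + r - 2 * q - 1) :
    ∃ (n : ℕ) (G : SimpleGraph (Fin n)), G.Connected ∧
      indMatchNum G = p ∧ minMatchNum G = q ∧ matchNum G = r ∧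
      G.edgeSet.ncard ≤
        p + (2 * q - r) + (p + r - 2 * q) * Nat.choose (2 * a + 1) 2
          + b * (4 * a + 3) :=
  stmt_15_general p q r a b hpq hr2q hr hab hb
end

section
/- Let G be a finite connected simple graph with ind-match(G) = 1. Then the number of edges of G is at least (match(G) + 1 choose 2). -/
/-!
Take a maximum matching `M`, with `m` edges. As `ind-match G = 1`, any two edges of `M` are
joined by an edge of `G`. An edge `g` of `G` meets at most two edges of `M`, and the set of edges
of `M` it meets recovers the one- or two-element subset of `M` it was chosen for; so these
`m + (m choose 2) = (m + 1 choose 2)` subsets inject into the edge set of `G`.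
-/

variable {V : Type*}

lemma bddAbove_ncard_setOf {α : Type*} [Finite α] (P : Set α → Prop) :
    BddAbove {n | ∃ s : Set α, P s ∧ s.ncard = n} :=
  ⟨Nat.card α, by
    rintro n ⟨s, -, rfl⟩
    exact Set.ncard_le_card s⟩

lemma Finset.card_powersetCard_one_union_two {α : Type*} [DecidableEq α] (s : Finset α) :
    (s.powersetCard 1 ∪ s.powersetCard 2).card = (s.card + 1).choose 2 := by
  have hdisj : Disjoint (s.powersetCard 1) (s.powersetCard 2) :=
    Finset.disjoint_left.2 fun t h1 h2 => by
      rw [Finset.mem_powersetCard] at h1 h2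
      omega
  rw [Finset.card_union_of_disjoint hdisj, Finset.card_powersetCard, Finset.card_powersetCard,
    Nat.choose_succ_succ, Nat.choose_one_right]

namespace IsMatchingSet

variable {G : SimpleGraph V} {M : Set (Sym2 V)}

lemma mono {N : Set (Sym2 V)} (hM : IsMatchingSet G M) (hNM : N ⊆ M) : IsMatchingSet G N :=
  ⟨fun e he => hM.1 e (hNM he), fun e he f hf => hM.2 e (hNM he) f (hNM hf)⟩

lemma eq_of_mem_of_mem_s16 {e f : Sym2 V} {v : V} (hM : IsMatchingSet G M) (he : e ∈ M)
    (hf : f ∈ M) (hve : v ∈ e) (hvf : v ∈ f) : e = f := by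
  by_contra hef
  exact hM.2 e he f hf hef v hve hvf

end IsMatchingSet

lemma exists_isMatchingSet_ncard_eq_matchNum [Finite V] (G : SimpleGraph V) :
    ∃ M, IsMatchingSet G M ∧ M.ncard = matchNum G := by
  have hempty : IsMatchingSet G ∅ := ⟨by simp, by simp⟩
  exact Nat.sSup_mem (s := {n | ∃ M, IsMatchingSet G M ∧ M.ncard = n})
    ⟨0, ∅, hempty, Set.ncard_empty _⟩ (bddAbove_ncard_setOf _)

lemma IsInducedMatchingSet.ncard_le_indMatchNum [Finite V] {G : SimpleGraph V}
    {M : Set (Sym2 V)} (hM : IsInducedMatchingSet G M) : M.ncard ≤ indMatchNum G :=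
  le_csSup (bddAbove_ncard_setOf _) ⟨M, hM, rfl⟩

lemma IsMatchingSet.exists_edge_meeting_of_indMatchNum_le_one [Finite V]
    {G : SimpleGraph V} {M : Set (Sym2 V)} (hG : indMatchNum G ≤ 1) (hM : IsMatchingSet G M)
    {e f : Sym2 V} (he : e ∈ M) (hf : f ∈ M) (hef : e ≠ f) :
    ∃ g ∈ G.edgeSet, (∃ v, v ∈ g ∧ v ∈ e) ∧ (∃ v, v ∈ g ∧ v ∈ f) := by
  by_contra hjoin
  have hind : IsInducedMatchingSet G {e, f} := by
    refine ⟨hM.mono (Set.insert_subset he (Set.singleton_subset_iff.2 hf)), ?_⟩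
    rintro x (rfl | rfl) y (rfl | rfl) hxy g hg ⟨hgx, hgy⟩ <;>
      first | exact hxy rfl | exact hjoin ⟨g, hg, hgx, hgy⟩ | exact hjoin ⟨g, hg, hgy, hgx⟩
  have htwo := hind.ncard_le_indMatchNum
  rw [Set.ncard_pair hef] at htwo
  omega

open Classical in
noncomputable def touchedEdges (M : Finset (Sym2 V)) (g : Sym2 V) : Finset (Sym2 V) :=
  M.filter fun h => ∃ v, v ∈ g ∧ v ∈ h

section touchedEdges

variable {G : SimpleGraph V} {M : Finset (Sym2 V)} {e f : Sym2 V}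

lemma touchedEdges_of_mem (hM : IsMatchingSet G ↑M) (he : e ∈ M) : touchedEdges M e = {e} := by
  ext h
  simp only [touchedEdges, Finset.mem_filter, Finset.mem_singleton]
  constructor
  · rintro ⟨hh, v, hve, hvh⟩
    exact (hM.eq_of_mem_of_mem_s16 he hh hve hvh).symm
  · rintro rfl
    exact ⟨he, h.out.1, Sym2.out_fst_mem h, Sym2.out_fst_mem h⟩

lemma touchedEdges_eq_pair [DecidableEq V] (hM : IsMatchingSet G ↑M) (he : e ∈ M) (hf : f ∈ M)
    (hef : e ≠ f) {g : Sym2 V} {u w : V} (hug : u ∈ g) (hue : u ∈ e) (hwg : w ∈ g) (hwf : w ∈ f) :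
    touchedEdges M g = {e, f} := by
  have huw : u ≠ w := by
    rintro rfl
    exact hef (hM.eq_of_mem_of_mem_s16 he hf hue hwf)
  obtain rfl : g = s(u, w) := (Sym2.mem_and_mem_iff huw).1 ⟨hug, hwg⟩
  ext h
  simp only [touchedEdges, Finset.mem_filter, Finset.mem_insert, Finset.mem_singleton,
    Sym2.mem_iff]
  constructor
  · rintro ⟨hh, v, rfl | rfl, hvh⟩
    · exact Or.inl (hM.eq_of_mem_of_mem_s16 hh he hvh hue)
    · exact Or.inr (hM.eq_of_mem_of_mem_s16 hh hf hvh hwf)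
  · rintro (rfl | rfl)
    · exact ⟨he, u, Or.inl rfl, hue⟩
    · exact ⟨hf, w, Or.inr rfl, hwf⟩

end touchedEdges

theorem IsMatchingSet.choose_card_add_one_two_le_ncard_edgeSet [Finite V]
    {G : SimpleGraph V} {M : Finset (Sym2 V)} (hM : IsMatchingSet G ↑M)
    (hjoin : ∀ e ∈ M, ∀ f ∈ M, e ≠ f →
      ∃ g ∈ G.edgeSet, (∃ v, v ∈ g ∧ v ∈ e) ∧ (∃ v, v ∈ g ∧ v ∈ f)) :
    (M.card + 1).choose 2 ≤ G.edgeSet.ncard := by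
  classical
  have hfin := G.edgeSet.toFinite
  have hsub : M.powersetCard 1 ∪ M.powersetCard 2 ⊆ hfin.toFinset.image (touchedEdges M) := by
    intro s hs
    simp only [Finset.mem_union, Finset.mem_powersetCard] at hs
    simp only [Finset.mem_image, Set.Finite.mem_toFinset]
    rcases hs with ⟨hsM, hs1⟩ | ⟨hsM, hs2⟩
    · obtain ⟨e, rfl⟩ := Finset.card_eq_one.1 hs1
      have he : e ∈ M := hsM (Finset.mem_singleton_self e)
      exact ⟨e, hM.1 e he, touchedEdges_of_mem hM he⟩
    · obtain ⟨e, f, hef, rfl⟩ := Finset.card_eq_two.1 hs2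
      have he : e ∈ M := hsM (by simp)
      have hf : f ∈ M := hsM (by simp)
      obtain ⟨g, hg, ⟨u, hug, hue⟩, ⟨w, hwg, hwf⟩⟩ := hjoin e he f hf hef
      exact ⟨g, hg, touchedEdges_eq_pair hM he hf hef hug hue hwg hwf⟩
  calc (M.card + 1).choose 2 = (M.powersetCard 1 ∪ M.powersetCard 2).card :=
        (Finset.card_powersetCard_one_union_two M).symm
    _ ≤ (hfin.toFinset.image (touchedEdges M)).card := Finset.card_le_card hsub
    _ ≤ hfin.toFinset.card := Finset.card_image_le
    _ = G.edgeSet.ncard := (Set.ncard_eq_toFinset_card _ hfin).symm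

theorem stmt_16_general (V : Type) [Fintype V] (G : SimpleGraph V)
    (hind : indMatchNum G = 1) :
    Nat.choose (matchNum G + 1) 2 ≤ G.edgeSet.ncard := by
  obtain ⟨M, hM, hcard⟩ := exists_isMatchingSet_ncard_eq_matchNum G
  lift M to Finset (Sym2 V) using M.toFinite
  rw [← hcard, Set.ncard_coe_finset]
  exact hM.choose_card_add_one_two_le_ncard_edgeSet fun e he f hf hef =>
    hM.exists_edge_meeting_of_indMatchNum_le_one hind.le he hf hef

theorem stmt_16 (V : Type) [Fintype V] (G : SimpleGraph V) (hconn : G.Connected)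
    (hind : indMatchNum G = 1) :
    Nat.choose (matchNum G + 1) 2 ≤ G.edgeSet.ncard :=
  stmt_16_general V G hind
end

section
/- Let r ≥ 2 be an integer and let G_r be the whiskered complete graph: the simple graph on the 2r vertices x₁, …, x_r, y₁, …, y_r whose edges are all pairs {x_i, x_j} with 1 ≤ i < j ≤ r together with the edges {x_k, y_k} for 1 ≤ k ≤ r. Then ind-match(G_r) = 1, min-match(G_r) = ⌈r/2⌉ and match(G_r) = r. -/
/-!
Every edge of `G_r` contains some `x_k`, so the `x`'s form a vertex cover that is also a clique.
A vertex cover bounds every matching, so matchings have at most `r` edges, and the `r` whiskers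
`x_k y_k` attain this. Two edges of an induced matching would be joined by the edge between their
`x`'s, so induced matchings are single edges. The vertices matched by a maximal matching `M` form
a vertex cover of size at most `2 |M|`, which therefore bounds the `r` whiskers: `|M| ≥ ⌈r/2⌉`.
Conversely, matching `x_{2i}` with `x_{2i+1}` (and the last `x` with its whisker when `r` is odd)
covers all `x`'s, hence is a maximal matching of size `⌈r/2⌉`.
-/
variable {V : Type*}

/-- The whiskered complete graph `G_r` on vertices `x₁, …, x_r` (the `Sum.inl`s) and
`y₁, …, y_r` (the `Sum.inr`s): all pairs of distinct `x`'s are adjacent, and `x_k` is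
adjacent to `y_k` for each `k`. -/
def whiskeredComplete (r : ℕ) : SimpleGraph (Fin r ⊕ Fin r) :=
  SimpleGraph.fromRel (fun a b =>
    match a, b with
    | Sum.inl _, Sum.inl _ => True
    | Sum.inl i, Sum.inr j => i = j
    | _, _ => False)

open Set

section Matching

variable {G : SimpleGraph V}

lemma SimpleGraph.IsVertexCover.exists_mem {C : Set V} (hC : G.IsVertexCover C)
    {e : Sym2 V} (he : e ∈ G.edgeSet) : ∃ v ∈ C, v ∈ e := by
  induction e using Sym2.ind with
  | _ a b => rcases hC he with h | h <;> exact ⟨_, h, by simp⟩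

def matchedVerts (M : Set (Sym2 V)) : Set V := {v | ∃ e ∈ M, v ∈ e}

lemma ncard_matchedVerts_le {M : Set (Sym2 V)} (hM : M.Finite) :
    (matchedVerts M).ncard ≤ 2 * M.ncard := by
  let endpoint : Sym2 V × Bool → V := fun p => if p.2 then p.1.out.1 else p.1.out.2
  have hsub : matchedVerts M ⊆ endpoint '' (M ×ˢ univ) := by
    rintro v ⟨e, he, hv⟩
    rw [← e.out_eq, Sym2.mem_iff] at hv
    rcases hv with rfl | rfl
    · exact ⟨(e, true), ⟨he, trivial⟩, rfl⟩
    · exact ⟨(e, false), ⟨he, trivial⟩, rfl⟩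
  have hfin : (M ×ˢ (univ : Set Bool)).Finite := hM.prod finite_univ
  calc (matchedVerts M).ncard ≤ (endpoint '' (M ×ˢ univ)).ncard :=
        ncard_le_ncard hsub (hfin.image _)
    _ ≤ (M ×ˢ (univ : Set Bool)).ncard := ncard_image_le hfin
    _ = 2 * M.ncard := by rw [ncard_prod, ncard_univ, Nat.card_eq_fintype_card]; simp [mul_comm]

lemma isMaximalMatchingSet_iff_s17 {M : Set (Sym2 V)} :
    IsMaximalMatchingSet G M ↔ IsMatchingSet G M ∧ G.IsVertexCover (matchedVerts M) := by
  refine ⟨fun hM => ⟨hM.1, fun a b hab => ?_⟩, fun ⟨hM, hC⟩ => ⟨hM, fun e he heM hins => ?_⟩⟩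
  · by_contra! hfree
    have hfree' : ∀ f ∈ M, ∀ v ∈ s(a, b), v ∉ f := by
      intro f hf v hv hvf
      rcases Sym2.mem_iff.1 hv with rfl | rfl
      exacts [hfree.1 ⟨f, hf, hvf⟩, hfree.2 ⟨f, hf, hvf⟩]
    refine hM.2 s(a, b) hab (fun h => hfree.1 ⟨_, h, Sym2.mem_mk_left a b⟩) ⟨?_, ?_⟩
    · rintro e (rfl | he)
      exacts [hab, hM.1.1 e he]
    · rintro e (rfl | he) f (rfl | hf) hne v hve hvf
      · exact hne rfl
      · exact hfree' f hf v hve hvf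
      · exact hfree' e he v hvf hve
      · exact hM.1.2 e he f hf hne v hve hvf
  · obtain ⟨v, ⟨f, hf, hvf⟩, hve⟩ := hC.exists_mem he
    exact hins.2 e (mem_insert _ _) f (mem_insert_of_mem _ hf) (fun h => heM (h ▸ hf)) v hve hvf

lemma IsMatchingSet.ncard_le_of_isVertexCover {M : Set (Sym2 V)} (hM : IsMatchingSet G M)
    {C : Set V} (hC : G.IsVertexCover C) (hCfin : C.Finite) : M.ncard ≤ C.ncard := by
  have hpick : ∀ e : M, ∃ v ∈ C, v ∈ (e : Sym2 V) := fun e => hC.exists_mem (hM.1 e e.2)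
  choose pick hpickC hpicke using hpick
  have hinj : Function.Injective fun e : M => (⟨pick e, hpickC e⟩ : C) := by
    intro e f hef
    by_contra hne
    have hpick_eq : pick e = pick f := congrArg Subtype.val hef
    exact hM.2 e e.2 f f.2 (Subtype.coe_ne_coe.2 hne) _ (hpicke e) (hpick_eq ▸ hpicke f)
  have := hCfin.to_subtype
  simpa only [Nat.card_coe_set_eq] using Nat.card_le_card_of_injective _ hinj

lemma IsMatchingSet.ncard_le_two_mul [Finite V] {M N : Set (Sym2 V)} (hN : IsMatchingSet G N)
    (hM : IsMaximalMatchingSet G M) : N.ncard ≤ 2 * M.ncard :=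
  (hN.ncard_le_of_isVertexCover (isMaximalMatchingSet_iff_s17.1 hM).2 (toFinite _)).trans
    (ncard_matchedVerts_le (toFinite M))

lemma isMatchingSet_range {ι : Type*} {f : ι → Sym2 V} (hf : ∀ i, f i ∈ G.edgeSet)
    (β : V → ι) (hβ : ∀ i, ∀ v ∈ f i, β v = i) : IsMatchingSet G (range f) := by
  refine ⟨forall_mem_range.2 hf, ?_⟩
  rintro _ ⟨i, rfl⟩ _ ⟨j, rfl⟩ hne v hvi hvj
  exact hne (by rw [← hβ i v hvi, hβ j v hvj])

lemma injective_of_forall_mem {ι : Type*} {f : ι → Sym2 V} (β : V → ι)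
    (hβ : ∀ i, ∀ v ∈ f i, β v = i) : Function.Injective f := fun i j hij => by
  rw [← hβ i _ (f i).out_fst_mem, hβ j _ (hij ▸ (f i).out_fst_mem)]

lemma isInducedMatchingSet_singleton {e : Sym2 V} (he : e ∈ G.edgeSet) :
    IsInducedMatchingSet G {e} :=
  ⟨⟨by simpa using he, by simp⟩, by simp⟩

lemma IsInducedMatchingSet.ncard_le_one_of_isClique {M : Set (Sym2 V)}
    (hM : IsInducedMatchingSet G M) {C : Set V} (hC : G.IsVertexCover C) (hK : G.IsClique C) :
    M.ncard ≤ 1 := by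
  have hsub : M.Subsingleton := by
    intro e he f hf
    by_contra hne
    obtain ⟨a, haC, hae⟩ := hC.exists_mem (hM.1.1 e he)
    obtain ⟨b, hbC, hbf⟩ := hC.exists_mem (hM.1.1 f hf)
    have hab : a ≠ b := by
      rintro rfl
      exact hM.1.2 e he f hf hne a hae hbf
    exact hM.2 e he f hf hne s(a, b) (hK haC hbC hab)
      ⟨⟨a, Sym2.mem_mk_left a b, hae⟩, ⟨b, Sym2.mem_mk_right a b, hbf⟩⟩
  have := hsub.finite.to_subtype
  exact (ncard_le_one_iff_subsingleton).2 hsub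

end Matching

section WhiskeredComplete

open Sum

variable {r : ℕ}

@[simp]
lemma whiskeredComplete_adj_inl_inl {i j : Fin r} :
    (whiskeredComplete r).Adj (inl i) (inl j) ↔ i ≠ j := by
  simp [whiskeredComplete]

@[simp]
lemma whiskeredComplete_adj_inl_inr {i j : Fin r} :
    (whiskeredComplete r).Adj (inl i) (inr j) ↔ i = j := by
  simp [whiskeredComplete]

@[simp]
lemma whiskeredComplete_adj_inr_inl {i j : Fin r} :
    (whiskeredComplete r).Adj (inr i) (inl j) ↔ i = j := by
  simp [whiskeredComplete, eq_comm]

@[simp]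
lemma whiskeredComplete_not_adj_inr_inr {i j : Fin r} :
    ¬ (whiskeredComplete r).Adj (inr i) (inr j) := by
  simp [whiskeredComplete]

lemma isVertexCover_range_inl : (whiskeredComplete r).IsVertexCover (range inl) := by
  rintro (i | i) (j | j) h <;> simp_all

lemma isClique_range_inl : (whiskeredComplete r).IsClique (range inl) := by
  rintro _ ⟨i, rfl⟩ _ ⟨j, rfl⟩ h
  simpa using h

def whiskers (r : ℕ) (k : Fin r) : Sym2 (Fin r ⊕ Fin r) := s(inl k, inr k)

lemma whiskers_mem_edgeSet (k : Fin r) : whiskers r k ∈ (whiskeredComplete r).edgeSet := by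
  simp [whiskers]

lemma elim_id_of_mem_whiskers {k : Fin r} {v : Fin r ⊕ Fin r} (hv : v ∈ whiskers r k) :
    Sum.elim id id v = k := by
  rcases Sym2.mem_iff.1 hv with rfl | rfl <;> rfl

lemma isMatchingSet_range_whiskers : IsMatchingSet (whiskeredComplete r) (range (whiskers r)) :=
  isMatchingSet_range whiskers_mem_edgeSet _ fun _ _ => elim_id_of_mem_whiskers

lemma ncard_range_whiskers : (range (whiskers r)).ncard = r := by
  rw [ncard_range_of_injective (injective_of_forall_mem _ fun _ _ => elim_id_of_mem_whiskers)]
  simp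

def pairing (r : ℕ) (i : Fin ((r + 1) / 2)) : Sym2 (Fin r ⊕ Fin r) :=
  s(inl ⟨2 * i, by omega⟩,
    if h : 2 * i + 1 < r then inl ⟨2 * i + 1, h⟩ else inr ⟨2 * i, by omega⟩)

def pairIndex (v : Fin r ⊕ Fin r) : Fin ((r + 1) / 2) :=
  ⟨Sum.elim Fin.val Fin.val v / 2, by rcases v with v | v <;> simp <;> omega⟩

lemma pairing_mem_edgeSet (i : Fin ((r + 1) / 2)) :
    pairing r i ∈ (whiskeredComplete r).edgeSet := by
  unfold pairing
  split_ifs <;> simp [Fin.ext_iff]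

lemma pairIndex_of_mem_pairing {i : Fin ((r + 1) / 2)} {v : Fin r ⊕ Fin r}
    (hv : v ∈ pairing r i) : pairIndex v = i := by
  unfold pairing at hv
  split_ifs at hv <;> rcases Sym2.mem_iff.1 hv with rfl | rfl <;>
    simp [pairIndex, Fin.ext_iff]
  omega

lemma inl_mem_pairing (k : Fin r) : inl k ∈ pairing r (pairIndex (inl k)) := by
  have := k.isLt
  simp only [pairing, pairIndex, Sym2.mem_iff, elim_inl]
  by_cases h : 2 * (k / 2) + 1 < r <;> simp [h, Fin.ext_iff] <;> omega

lemma isMaximalMatchingSet_range_pairing :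
    IsMaximalMatchingSet (whiskeredComplete r) (range (pairing r)) := by
  refine isMaximalMatchingSet_iff_s17.2
    ⟨isMatchingSet_range pairing_mem_edgeSet _ fun _ _ => pairIndex_of_mem_pairing, ?_⟩
  refine isVertexCover_range_inl.subset ?_
  rintro _ ⟨k, rfl⟩
  exact ⟨_, mem_range_self _, inl_mem_pairing k⟩

lemma ncard_range_pairing : (range (pairing r)).ncard = (r + 1) / 2 := by
  rw [ncard_range_of_injective (injective_of_forall_mem _ fun _ _ => pairIndex_of_mem_pairing)]
  simp

end WhiskeredComplete

theorem stmt_17 (r : ℕ) (hr : 2 ≤ r) :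
    indMatchNum (whiskeredComplete r) = 1 ∧
    minMatchNum (whiskeredComplete r) = (r + 1) / 2 ∧
    matchNum (whiskeredComplete r) = r := by
  refine ⟨?_, ?_, ?_⟩
  · refine IsGreatest.csSup_eq ⟨⟨_, isInducedMatchingSet_singleton
      (whiskers_mem_edgeSet ⟨0, by omega⟩), ncard_singleton _⟩, ?_⟩
    rintro _ ⟨M, hM, rfl⟩
    exact hM.ncard_le_one_of_isClique isVertexCover_range_inl isClique_range_inl
  · refine IsLeast.csInf_eq ⟨⟨_, isMaximalMatchingSet_range_pairing, ncard_range_pairing⟩, ?_⟩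
    rintro _ ⟨M, hM, rfl⟩
    have hr_le := isMatchingSet_range_whiskers.ncard_le_two_mul hM
    rw [ncard_range_whiskers] at hr_le
    omega
  · refine IsGreatest.csSup_eq ⟨⟨_, isMatchingSet_range_whiskers, ncard_range_whiskers⟩, ?_⟩
    rintro _ ⟨M, hM, rfl⟩
    simpa [ncard_range_of_injective Sum.inl_injective] using
      hM.ncard_le_of_isVertexCover isVertexCover_range_inl (toFinite _)
end
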